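/- For 1 ≤ i ≤ k < j ≤ g−1 and h = 1,2, the Wronskian satisfies the polynomial identity ν_{ij,h}(t) = ((−1)^h a_{j,h} / A_2) · (t² − 2 a_{i,h} t + a_{i,h} a_{j,h}) · (∏_{r=1, r≠i,j}^{g−1}(t − a_{r,h}))². -/

import Mathlib

open Polynomial Finset

/-- `A_h = ∏_{i=1}^{g-1} a_{i,h}`. -/
noncomputable def Aprod (g : ℕ) (a : ℕ → ℕ → ℂ) (h : ℕ) : ℂ :=
  ∏ i ∈ Finset.Icc 1 (g - 1), a i h

/-- `d_2 = 1`, `d_1 = -A_1/A_2`. -/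
noncomputable def dcoef (g : ℕ) (a : ℕ → ℕ → ℂ) (h : ℕ) : ℂ :=
  if h = 1 then -Aprod g a 1 / Aprod g a 2 else 1

/-- The polynomial `α_{i,h}`: for `1 ≤ i ≤ k = ⌊g/2⌋`,
`α_{i,h}(t) = t·∏_{r≠i}(t − a_{r,h})`; for `k+1 ≤ i ≤ g−1`,
`α_{i,h}(t) = −(d_h a_{i,h}/A_h)·∏_{r≠i}(t − a_{r,h})`. -/
noncomputable def alphaPoly (g : ℕ) (a : ℕ → ℕ → ℂ) (i h : ℕ) : Polynomial ℂ :=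
  if i ≤ g / 2 then
    X * ∏ r ∈ (Finset.Icc 1 (g - 1)).erase i, (X - C (a r h))
  else
    C (-(dcoef g a h * a i h / Aprod g a h)) *
      ∏ r ∈ (Finset.Icc 1 (g - 1)).erase i, (X - C (a r h))

/-- Wronskian `ν_{ij,h} = α_{i,h} α'_{j,h} − α_{j,h} α'_{i,h}`. -/
noncomputable def nuPoly (g : ℕ) (a : ℕ → ℕ → ℂ) (i j h : ℕ) : Polynomial ℂ :=
  alphaPoly g a i h * derivative (alphaPoly g a j h)
    - alphaPoly g a j h * derivative (alphaPoly g a i h)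

/-- Torsion values: for `1 ≤ m ≤ g` (with the convention `a_{g,h} = 0`),
`τ_{ij,m} = α'_{j,1}(a_{m,1})·α'_{i,2}(a_{m,2}) − α'_{i,1}(a_{m,1})·α'_{j,2}(a_{m,2})`;
for `m = g+1`, `τ_{ij,g+1} = c_{j,1}c_{i,2} − c_{i,1}c_{j,2}` where `c_{i,h}` is the
coefficient of `t^{g-2}` in `α_{i,h}`. -/
noncomputable def tauVal (g : ℕ) (a : ℕ → ℕ → ℂ) (i j m : ℕ) : ℂ :=
  if m ≤ g then
    (derivative (alphaPoly g a j 1)).eval (if m = g then 0 else a m 1) *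
        (derivative (alphaPoly g a i 2)).eval (if m = g then 0 else a m 2)
      - (derivative (alphaPoly g a i 1)).eval (if m = g then 0 else a m 1) *
        (derivative (alphaPoly g a j 2)).eval (if m = g then 0 else a m 2)
  else
    (alphaPoly g a j 1).coeff (g - 2) * (alphaPoly g a i 2).coeff (g - 2)
      - (alphaPoly g a i 1).coeff (g - 2) * (alphaPoly g a j 2).coeff (g - 2)

/-- The `(5g−5) × ((g−1)(g−2)/2)` Gaussian matrix: the column indexed by the pair
`(i,j)`, `1 ≤ i < j ≤ g−1`, consists of the `2g−3` coefficients of `ν_{ij,1}`, the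
`2g−3` coefficients of `ν_{ij,2}`, and then `τ_{ij,1}, …, τ_{ij,g+1}`. -/
noncomputable def gaussMatrix (g : ℕ) (a : ℕ → ℕ → ℂ) :
    Matrix (Fin (5 * g - 5))
      {p : Fin g × Fin g // 1 ≤ (p.1 : ℕ) ∧ (p.1 : ℕ) < (p.2 : ℕ)} ℂ :=
  fun r p =>
    if (r : ℕ) < 2 * g - 3 then (nuPoly g a (p.1.1 : ℕ) (p.1.2 : ℕ) 1).coeff (r : ℕ)
    else if (r : ℕ) < 2 * (2 * g - 3) then
      (nuPoly g a (p.1.1 : ℕ) (p.1.2 : ℕ) 2).coeff ((r : ℕ) - (2 * g - 3))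
    else tauVal g a (p.1.1 : ℕ) (p.1.2 : ℕ) ((r : ℕ) - 2 * (2 * g - 3) + 1)

/-- The parameters `a_{1,h}, …, a_{g−1,h}` (`h = 1,2`) are nonzero and pairwise
distinct. -/
def validParams (g : ℕ) (a : ℕ → ℕ → ℂ) : Prop :=
  ∀ h, h = 1 ∨ h = 2 →
    (∀ i ∈ Finset.Icc 1 (g - 1), a i h ≠ 0) ∧
      ∀ i ∈ Finset.Icc 1 (g - 1), ∀ j ∈ Finset.Icc 1 (g - 1), i ≠ j → a i h ≠ a j h

/-!
Both `α_{i,h}` and `α_{j,h}` are multiples of `Q = ∏_{r ≠ i,j} (t - a_{r,h})`, and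
`W(uQ, vQ) = Q² W(u, v)`, so `ν_{ij,h}` reduces to the Wronskian of `t (t - a_{j,h})` and
`c (t - a_{i,h})`. The constant is `c = -d_h a_{j,h} / A_h`, and `d_h / A_h = (-1)^h / A_2`.
-/

namespace Polynomial

variable {R : Type*} [CommRing R]

theorem wronskian_mul_right_mul_right (u v q : R[X]) :
    wronskian (u * q) (v * q) = q ^ 2 * wronskian u v := by
  simp only [wronskian, derivative_mul]
  ring

theorem wronskian_X_mul_X_sub_C_C_mul_X_sub_C (a b c : R) :
    wronskian (X * (X - C b)) (C c * (X - C a)) =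
      -C c * (X ^ 2 - C (2 * a) * X + C (a * b)) := by
  simp only [wronskian, derivative_mul, derivative_X, derivative_sub, derivative_C, map_mul,
    map_ofNat]
  ring

end Polynomial

section

variable {g : ℕ} {a : ℕ → ℕ → ℂ} {h : ℕ}

theorem nuPoly_eq_wronskian (i j : ℕ) :
    nuPoly g a i j h = wronskian (alphaPoly g a i h) (alphaPoly g a j h) := by
  rw [nuPoly, wronskian, mul_comm (alphaPoly g a j h)]

theorem alphaPoly_of_le_half {i j : ℕ} (hi : i ≤ g / 2) (hj : j ∈ Icc 1 (g - 1))
    (hij : i ≠ j) :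
    alphaPoly g a i h =
      X * (X - C (a j h)) * ∏ r ∈ ((Icc 1 (g - 1)).erase i).erase j, (X - C (a r h)) := by
  rw [alphaPoly, if_pos hi, ← mul_prod_erase _ _ (mem_erase.2 ⟨hij.symm, hj⟩), mul_assoc]

theorem alphaPoly_of_half_lt {i j : ℕ} (hj : g / 2 < j) (hi : i ∈ Icc 1 (g - 1))
    (hij : i ≠ j) :
    alphaPoly g a j h =
      C (-(dcoef g a h * a j h / Aprod g a h)) * (X - C (a i h)) *
        ∏ r ∈ ((Icc 1 (g - 1)).erase i).erase j, (X - C (a r h)) := by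
  rw [alphaPoly, if_neg hj.not_ge, erase_right_comm,
    ← mul_prod_erase _ _ (mem_erase.2 ⟨hij, hi⟩), mul_assoc]

theorem Aprod_ne_zero (ha : validParams g a) (hh : h = 1 ∨ h = 2) : Aprod g a h ≠ 0 :=
  prod_ne_zero_iff.2 (ha h hh).1

theorem dcoef_div_Aprod (ha : validParams g a) (hh : h = 1 ∨ h = 2) :
    dcoef g a h / Aprod g a h = (-1) ^ h / Aprod g a 2 := by
  rcases hh with rfl | rfl
  · have hA₁ := Aprod_ne_zero ha (Or.inl rfl)
    rw [dcoef, if_pos rfl]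
    field_simp
  · rw [dcoef, if_neg (by norm_num)]
    norm_num

end

theorem nuPoly_eq_of_le_half_lt_general (g : ℕ) (a : ℕ → ℕ → ℂ)
    (ha : validParams g a) (h : ℕ) (hh : h = 1 ∨ h = 2)
    (i j : ℕ) (hi : 1 ≤ i) (hik : i ≤ g / 2) (hkj : g / 2 < j) (hj : j ≤ g - 1) :
    nuPoly g a i j h =
      C ((-1 : ℂ) ^ h * a j h / Aprod g a 2) *
        (X ^ 2 - C (2 * a i h) * X + C (a i h * a j h)) *
        (∏ r ∈ ((Finset.Icc 1 (g - 1)).erase i).erase j, (X - C (a r h))) ^ 2 := by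
  have hiS : i ∈ Icc 1 (g - 1) := mem_Icc.2 ⟨hi, by omega⟩
  have hjS : j ∈ Icc 1 (g - 1) := mem_Icc.2 ⟨by omega, hj⟩
  have hij : i ≠ j := by omega
  have hcoef : -(dcoef g a h * a j h / Aprod g a h) = -((-1) ^ h * a j h / Aprod g a 2) := by
    rw [mul_div_right_comm, dcoef_div_Aprod ha hh, div_mul_eq_mul_div]
  rw [nuPoly_eq_wronskian, alphaPoly_of_le_half hik hjS hij, alphaPoly_of_half_lt hkj hiS hij,
    wronskian_mul_right_mul_right, hcoef,
    wronskian_X_mul_X_sub_C_C_mul_X_sub_C, map_neg, neg_neg]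
  ring

/-- For `1 ≤ i ≤ k < j ≤ g−1` (with `k = ⌊g/2⌋`) and `h = 1,2`,
`ν_{ij,h}(t) = ((−1)^h a_{j,h}/A_2) · (t² − 2a_{i,h} t + a_{i,h}a_{j,h}) · (∏_{r≠i,j}(t − a_{r,h}))²`. -/
theorem nuPoly_eq_of_le_half_lt (g : ℕ) (hg : 3 ≤ g) (a : ℕ → ℕ → ℂ)
    (ha : validParams g a) (h : ℕ) (hh : h = 1 ∨ h = 2)
    (i j : ℕ) (hi : 1 ≤ i) (hik : i ≤ g / 2) (hkj : g / 2 < j) (hj : j ≤ g - 1) :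
    nuPoly g a i j h =
      C ((-1 : ℂ) ^ h * a j h / Aprod g a 2) *
        (X ^ 2 - C (2 * a i h) * X + C (a i h * a j h)) *
        (∏ r ∈ ((Finset.Icc 1 (g - 1)).erase i).erase j, (X - C (a r h))) ^ 2 :=
  nuPoly_eq_of_le_half_lt_general g a ha h hh i j hi hik hkj hj
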